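/- Let G be a connected critical triangle-free graph with maximum degree at most 3 that is 2-connected, and suppose G has a 2-element vertex cutset {v, w}. Then v and w are not adjacent. -/

import Mathlib

open SimpleGraph

/-- A set of vertices is independent if no two of its members are adjacent. -/
def IsIndepSet {V : Type*} (G : SimpleGraph V) (s : Set V) : Prop :=
  s.Pairwise fun a b => ¬ G.Adj a b

/-- The independence number of a graph: the maximum size of an independent set. -/
noncomputable def alpha {V : Type*} (G : SimpleGraph V) : ℕ :=
  sSup {n | ∃ s : Finset V, _root_.IsIndepSet G (s : Set V) ∧ s.card = n}

/-- A graph is critical if deleting any edge strictly increases the independence number. -/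
def IsCritical {V : Type*} (G : SimpleGraph V) : Prop :=
  ∀ e ∈ G.edgeSet, alpha G < alpha (G.deleteEdges {e})

/-!
Suppose `v ~ w` and `A` is a side of the separation by `{v, w}`, so every edge leaving `A` ends
in `v` or `w`. Since `G - w` is connected, `v` has a neighbour `a ∈ A` and a neighbour `b` on the
other side `B`. Criticality gives independent sets `I`, `J`, `L` of size `α(G) + 1` in `G - vw`,
`G - va`, `G - vb`, each containing both ends of its edge. Recombining their halves,
`(I ∩ A) ∪ (J ∖ A)`, `(L ∩ A) ∪ (I ∖ A ∖ {w})` and `(J ∩ A) ∪ (L ∖ A ∖ {v})` are independent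
in `G`, so their sizes, which add up to `|I| + |J| + |L| - 2 ≥ 3α(G) + 1`, are each at most
`α(G)`: a contradiction.
-/

open Finset

section

variable {V : Type*} {G : SimpleGraph V}

namespace SimpleGraph

theorem alpha_eq_indepNum (G : SimpleGraph V) : alpha G = G.indepNum := by
  simp only [alpha, indepNum, isNIndepSet_iff]
  rfl

theorem IsIndepSet.sym2_eq_of_deleteEdges {I : Set V} {e : Sym2 V}
    (hI : (G.deleteEdges {e}).IsIndepSet I) {x y : V} (hx : x ∈ I) (hy : y ∈ I)
    (hxy : G.Adj x y) : s(x, y) = e := by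
  by_contra h
  exact hI hx hy hxy.ne (deleteEdges_adj.mpr ⟨hxy, h⟩)

theorem IsIndepSet.not_adj_of_deleteEdges {I : Set V} {p q x y : V}
    (hI : (G.deleteEdges {s(p, q)}).IsIndepSet I) (hx : x ∈ I) (hy : y ∈ I)
    (hxp : x ≠ p) (hxq : x ≠ q) : ¬ G.Adj x y := fun hxy => by
  rcases Sym2.mem_iff.mp (hI.sym2_eq_of_deleteEdges hx hy hxy ▸ Sym2.mem_mk_left x y)
    with rfl | rfl <;> contradiction

theorem IsIndepSet.subset_of_deleteEdges {I S : Finset V} {p q : V}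
    (hI : (G.deleteEdges {s(p, q)}).IsIndepSet I) (hS : S ⊆ I) (hpq : p ∉ S ∨ q ∉ S) :
    G.IsIndepSet S := by
  intro x hx y hy _ hxy
  rcases Sym2.eq_iff.mp (hI.sym2_eq_of_deleteEdges (hS hx) (hS hy) hxy)
    with ⟨rfl, rfl⟩ | ⟨rfl, rfl⟩ <;> tauto

theorem card_add_card_le_indepNum [Finite V] [DecidableEq V] {s t : Finset V}
    (hs : G.IsIndepSet s) (ht : G.IsIndepSet t) (hst : ∀ x ∈ s, ∀ y ∈ t, ¬ G.Adj x y)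
    (hdisj : Disjoint s t) : #s + #t ≤ G.indepNum := by
  rw [← card_union_of_disjoint hdisj]
  refine IsIndepSet.card_le_indepNum ?_
  rw [coe_union]
  exact Set.pairwise_union.mpr
    ⟨hs, ht, fun x hx y hy _ => ⟨hst x hx y hy, fun h => hst x hx y hy h.symm⟩⟩

theorem exists_adj_of_induce_preconnected {U S : Set V} (hU : (G.induce U).Preconnected)
    {x y : V} (hx : x ∈ U) (hy : y ∈ U) (hxS : x ∈ S) (hyS : y ∉ S) :
    ∃ x' ∈ U ∩ S, ∃ y' ∈ U \ S, G.Adj x' y' := by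
  obtain ⟨p⟩ := hU ⟨x, hx⟩ ⟨y, hy⟩
  obtain ⟨d, -, hd₁, hd₂⟩ := p.exists_boundary_dart {z : U | z.1 ∈ S} hxS hyS
  exact ⟨d.fst, ⟨d.fst.2, hd₁⟩, d.snd, ⟨d.snd.2, hd₂⟩, by simpa using d.adj⟩

theorem exists_side_of_not_preconnected_induce_compl {K : Set V}
    (h : ¬ (G.induce Kᶜ).Preconnected) :
    ∃ A : Set V, Disjoint A K ∧ (∀ x ∈ A, ∀ y ∉ A, G.Adj x y → y ∈ K) ∧
      (∃ x ∈ A, ∃ y ∉ A, y ∉ K) := by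
  obtain ⟨x₀, y₀, hxy⟩ : ∃ x₀ y₀, ¬ (G.induce Kᶜ).Reachable x₀ y₀ := by
    simpa [Preconnected] using h
  refine ⟨Subtype.val '' {z | (G.induce Kᶜ).Reachable x₀ z}, ?_, ?_,
    x₀, ⟨x₀, .refl _, rfl⟩, y₀, ?_, y₀.2⟩
  · rw [Set.disjoint_right]
    rintro y hy ⟨z, -, rfl⟩
    exact z.2 hy
  · rintro _ ⟨z, hz, rfl⟩ y hyA hzy
    by_contra hyK
    exact hyA ⟨⟨y, hyK⟩, hz.trans (Adj.reachable (by simpa using hzy)), rfl⟩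
  · rintro ⟨z, hz, hzy⟩
    exact hxy (Subtype.ext hzy ▸ hz)

theorem exists_adj_mem_of_boundary {A : Set V} {v w : V} (hw : (G.induce {w}ᶜ).Preconnected)
    (hwA : w ∉ A) (hA : ∀ x ∈ A, ∀ y ∉ A, G.Adj x y → y = v ∨ y = w)
    {x y : V} (hx : x ∈ A) (hy : y ∉ A) (hyw : y ≠ w) : ∃ a ∈ A, G.Adj v a := by
  obtain ⟨a, ⟨-, haA⟩, u, ⟨huw, huA⟩, hau⟩ := exists_adj_of_induce_preconnected (S := A) hw
    (show x ≠ w from fun h => hwA (h ▸ hx)) hyw hx hy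
  rcases hA a haA u huA hau with rfl | rfl
  · exact ⟨a, haA, hau.symm⟩
  · exact absurd rfl huw

end SimpleGraph

open SimpleGraph

theorem IsCritical.exists_isIndepSet [Finite V] (hG : IsCritical G) {p q : V}
    (hpq : G.Adj p q) :
    ∃ I : Finset V, (G.deleteEdges {s(p, q)}).IsIndepSet I ∧ G.indepNum < #I ∧ p ∈ I ∧ q ∈ I := by
  obtain ⟨I, hI, hcard⟩ := (G.deleteEdges {s(p, q)}).exists_isNIndepSet_indepNum
  have hlt : G.indepNum < #I := by
    rw [hcard, ← alpha_eq_indepNum, ← alpha_eq_indepNum]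
    exact hG _ hpq
  refine ⟨I, hI, hlt, ?_⟩
  by_contra hpqI
  exact hlt.not_ge (hI.subset_of_deleteEdges subset_rfl (by tauto)).card_le_indepNum

theorem IsCritical.not_adj_of_boundary [Finite V] (hG : IsCritical G)
    {A : Set V} {v w a b : V} (hvA : v ∉ A) (hwA : w ∉ A)
    (hA : ∀ x ∈ A, ∀ y ∉ A, G.Adj x y → y = v ∨ y = w)
    (haA : a ∈ A) (hva : G.Adj v a) (hbA : b ∉ A) (hbw : b ≠ w) (hvb : G.Adj v b) :
    ¬ G.Adj v w := by
  classical
  intro hvw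
  obtain ⟨I, hI, hIn, hvI, hwI⟩ := hG.exists_isIndepSet hvw
  obtain ⟨J, hJ, hJn, hvJ, -⟩ := hG.exists_isIndepSet hva
  obtain ⟨L, hL, hLn, hvL, -⟩ := hG.exists_isIndepSet hvb
  have hwL : w ∉ L := fun hwL =>
    hbw (Sym2.congr_right.mp (hL.sym2_eq_of_deleteEdges hvL hwL hvw)).symm
  have hne : ∀ {x}, x ∈ A → x ≠ v ∧ x ≠ w ∧ x ≠ b :=
    fun hx => ⟨fun h => hvA (h ▸ hx), fun h => hwA (h ▸ hx), fun h => hbA (h ▸ hx)⟩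
  have hX₁ : #(I.filter (· ∈ A)) + #(J.filter (· ∉ A)) ≤ G.indepNum := by
    refine card_add_card_le_indepNum
      (hI.subset_of_deleteEdges (filter_subset _ _) (.inl (by simp [hvA])))
      (hJ.subset_of_deleteEdges (filter_subset _ _) (.inr (by simp [haA])))
      (fun x hx y hy hxy => ?_) (disjoint_filter_filter_not _ _ _)
    rw [mem_filter] at hx hy
    have hyI : y ∈ I := by rcases hA x hx.2 y hy.2 hxy with rfl | rfl <;> assumption
    exact hI.not_adj_of_deleteEdges hx.1 hyI (hne hx.2).1 (hne hx.2).2.1 hxy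
  have hX₂ : #(L.filter (· ∈ A)) + #((I.filter (· ∉ A)).erase w) ≤ G.indepNum := by
    refine card_add_card_le_indepNum
      (hL.subset_of_deleteEdges (filter_subset _ _) (.inr (by simp [hbA])))
      (hI.subset_of_deleteEdges ((erase_subset _ _).trans (filter_subset _ _))
        (.inr (by simp)))
      (fun x hx y hy hxy => ?_) ((disjoint_filter_filter_not _ _ _).mono_right (erase_subset _ _))
    rw [mem_filter] at hx
    rw [mem_erase, mem_filter] at hy
    obtain rfl : y = v := (hA x hx.2 y hy.2.2 hxy).resolve_right hy.1
    exact hL.not_adj_of_deleteEdges hx.1 hvL (hne hx.2).1 (hne hx.2).2.2 hxy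
  have hY : #(J.filter (· ∈ A)) + #((L.filter (· ∉ A)).erase v) ≤ G.indepNum := by
    refine card_add_card_le_indepNum
      (hJ.subset_of_deleteEdges (filter_subset _ _) (.inl (by simp [hvA])))
      (hL.subset_of_deleteEdges ((erase_subset _ _).trans (filter_subset _ _))
        (.inl (by simp)))
      (fun x hx y hy hxy => ?_) ((disjoint_filter_filter_not _ _ _).mono_right (erase_subset _ _))
    rw [mem_filter] at hx
    rw [mem_erase, mem_filter] at hy
    obtain rfl : y = w := (hA x hx.2 y hy.2.2 hxy).resolve_left hy.1
    exact hwL hy.2.1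
  have hIw := card_erase_add_one (s := I.filter (· ∉ A)) (mem_filter.mpr ⟨hwI, hwA⟩)
  have hLv := card_erase_add_one (s := L.filter (· ∉ A)) (mem_filter.mpr ⟨hvL, hvA⟩)
  have hIsplit := card_filter_add_card_filter_not (s := I) (· ∈ A)
  have hJsplit := card_filter_add_card_filter_not (s := J) (· ∈ A)
  have hLsplit := card_filter_add_card_filter_not (s := L) (· ∈ A)
  omega

end

theorem stmt_15_general {V : Type*} [Fintype V] (G : SimpleGraph V)
    (hcrit : IsCritical G)
    (h2conn : 3 ≤ Fintype.card V ∧ ∀ x : V, (G.induce ({x}ᶜ : Set V)).Connected)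
    (v w : V)
    (hcut : ¬ (G.induce (({v, w} : Set V)ᶜ)).Preconnected) :
    ¬ G.Adj v w := by
  obtain ⟨A, hAK, hA, x, hxA, y, hyA, hyK⟩ := exists_side_of_not_preconnected_induce_compl hcut
  have hvA : v ∉ A := fun h => hAK.notMem_of_mem_left h (by simp)
  have hwA : w ∉ A := fun h => hAK.notMem_of_mem_left h (by simp)
  replace hA : ∀ x ∈ A, ∀ y ∉ A, G.Adj x y → y = v ∨ y = w := by simpa using hA
  obtain ⟨hyv, hyw⟩ : y ≠ v ∧ y ≠ w := by simpa using hyK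
  set B := {z | z ∉ A ∧ z ≠ v ∧ z ≠ w}
  have hB : ∀ x ∈ B, ∀ y ∉ B, G.Adj x y → y = v ∨ y = w := by
    rintro x ⟨hxA, hxv, hxw⟩ y hyB hxy
    by_contra! hy
    rcases hA y (by simpa [B, hy.1, hy.2] using hyB) x hxA hxy.symm with rfl | rfl <;> contradiction
  have hw := (h2conn.2 w).preconnected
  obtain ⟨a, haA, hva⟩ := exists_adj_mem_of_boundary hw hwA hA hxA hyA hyw
  obtain ⟨b, ⟨hbA, -, hbw⟩, hvb⟩ := exists_adj_mem_of_boundary hw (by simp [B]) hB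
    (show y ∈ B from ⟨hyA, hyv, hyw⟩) (fun h => h.1 hxA) (fun h => hwA (h ▸ hxA))
  exact hcrit.not_adj_of_boundary hvA hwA hA haA hva hbA hbw hvb

/-- In a `2`-connected connected critical triangle-free graph with maximum degree at most
`3`, the two vertices of any `2`-element vertex cutset are not adjacent. -/
theorem stmt_15 {V : Type*} [Fintype V] (G : SimpleGraph V) [DecidableRel G.Adj]
    (hconn : G.Connected) (hcrit : IsCritical G) (htf : G.CliqueFree 3)
    (hdeg : ∀ x, G.degree x ≤ 3)
    (h2conn : 3 ≤ Fintype.card V ∧ ∀ x : V, (G.induce ({x}ᶜ : Set V)).Connected)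
    (v w : V) (hvw : v ≠ w)
    (hcut : ¬ (G.induce (({v, w} : Set V)ᶜ)).Preconnected) :
    ¬ G.Adj v w :=
  stmt_15_general G hcrit h2conn v w hcut
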